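/- arXiv:0807.1719 — 3 statements merged into one kernel-verified Lean document; each statement's English description precedes it below -/
import Mathlib

section
/- Let Ōɠ= id, a ‚ąą k* with t-th roots őĪ_1, ..., őĪ_t all distinct (t coprime to p), and suppose d = d' t, n/(b^d ‚ąí 1) = n'/(b^{d'} ‚ąí 1). Then D(d, n, a) ‚ČÖ D(d', n', őĪ_1) ‚äē ... ‚äē D(d', n', őĪ_t). -/
/-- The φ-semilinear operator of the φ-module `D(d, n, a)` over `K = k((u))`. -/
noncomputable def Dphi {k : Type*} [Field k]
    (φ : LaurentSeries k →+* LaurentSeries k) (d n : ℕ) (a : k)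
    (x : Fin d → LaurentSeries k) : Fin d → LaurentSeries k :=
  fun j =>
    if (j : ℕ) = 0 then
      HahnSeries.single (n : ℤ) a * φ (x ⟨d - 1, by have := j.isLt; omega⟩)
    else
      φ (x ⟨(j : ℕ) - 1, by have := j.isLt; omega⟩)

/-!
In the standard basis, `D(d, n, a)` is the twisted cyclic shift
`x ↦ (u^n a φ(x_{d-1}), φ(x_0), …, φ(x_{d-2}))`. Cut the `d = t d'` coordinates into `t` blocks
of length `d'` and rescale coordinate `i` of block `s` by `u^(b^i g_s)`, where
`g_s = n' (1 + q + ⋯ + q^(s-1))` and `q = b^d'`. Since `g_(s+1) = n' + q g_s` and, by the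
hypothesis relating `n` and `n'`, `g_t = n`, this spreads the single factor `u^n` at the wrap-around
into a factor `u^n'` at every block boundary. What remains permutes the blocks cyclically, with the
constant `a` at the wrap-around; as `φ` fixes constants, the Vandermonde matrix `(α_j^s)`, invertible
because the roots are distinct, diagonalises this permutation, and block `j` becomes
`D(d', n', α_j)`.
-/

open HahnSeries

namespace Fin

lemma val_neg_one_of_neZero {n : ℕ} [NeZero n] : ((-1 : Fin n) : ℕ) = n - 1 := by
  obtain ⟨m, rfl⟩ := Nat.exists_eq_succ_of_ne_zero (NeZero.ne n)
  exact coe_neg_one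

lemma val_sub_one {n : ℕ} [NeZero n] (x : Fin n) :
    ((x - 1 : Fin n) : ℕ) = if x = 0 then n - 1 else x - 1 := by
  split_ifs with hx
  · rw [hx, zero_sub, val_neg_one_of_neZero]
  · exact val_sub_one_of_ne_zero hx

end Fin

section FinProd

variable {t d : ℕ} [NeZero t] [NeZero d]

lemma finProdFinEquiv_eq_zero_iff (s : Fin t) (i : Fin d) :
    finProdFinEquiv (s, i) = 0 ↔ s = 0 ∧ i = 0 := by
  simp only [Fin.ext_iff, finProdFinEquiv_apply_val, Fin.val_zero, Nat.add_eq_zero_iff,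
    mul_eq_zero, NeZero.ne d, false_or, and_comm]

lemma finProdFinEquiv_sub_one (s : Fin t) (i : Fin d) :
    finProdFinEquiv (s, i) - 1 =
      if i = 0 then finProdFinEquiv (s - 1, -1) else finProdFinEquiv (s, i - 1) := by
  have hd := Nat.pos_of_neZero d
  have hlast : ∀ m, 0 < m → d - 1 + d * (m - 1) = d * m - 1 := fun m hm => by
    obtain ⟨m, rfl⟩ := Nat.exists_eq_add_one_of_ne_zero hm.ne'
    rw [Nat.add_sub_cancel, Nat.mul_succ]
    omega
  apply Fin.ext
  by_cases hi : i = 0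
  · by_cases hs : s = 0
    · simp [Fin.val_sub_one, finProdFinEquiv_eq_zero_iff, hi, hs, Fin.val_neg_one_of_neZero,
        hlast t (Nat.pos_of_neZero t), mul_comm]
    · simp [Fin.val_sub_one, finProdFinEquiv_eq_zero_iff, hi, hs, Fin.val_neg_one_of_neZero,
        hlast s (Nat.pos_of_ne_zero (Fin.val_ne_zero_iff.mpr hs))]
  · have := Nat.pos_of_ne_zero (Fin.val_ne_zero_iff.mpr hi)
    simp [Fin.val_sub_one, finProdFinEquiv_eq_zero_iff, hi]
    omega

end FinProd

lemma pow_val_mul_mulSingle {M : Type*} [Monoid M] {t : ℕ} [NeZero t] {x a : M}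
    (h : x ^ t = a) (s : Fin t) :
    x ^ (s : ℕ) * (Pi.mulSingle 0 a : Fin t → M) s = x * x ^ ((s - 1 : Fin t) : ℕ) := by
  rw [← pow_succ', Fin.val_sub_one, Pi.mulSingle_apply]
  split_ifs with hs
  · rw [hs, Fin.val_zero, pow_zero, one_mul, Nat.sub_add_cancel NeZero.one_le, h]
  · rw [mul_one, Nat.sub_add_cancel (Nat.one_le_iff_ne_zero.mpr (Fin.val_ne_zero_iff.mpr hs))]

def gaugeExponent (q : ℤ) (n' s : ℕ) : ℤ := n' * ∑ l ∈ Finset.range s, q ^ l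

lemma gaugeExponent_zero (q : ℤ) (n' : ℕ) : gaugeExponent q n' 0 = 0 := by
  simp [gaugeExponent]

lemma gaugeExponent_succ (q : ℤ) (n' s : ℕ) :
    gaugeExponent q n' (s + 1) = n' + q * gaugeExponent q n' s := by
  simp only [gaugeExponent, geom_sum_succ]
  ring

lemma gaugeExponent_eq_of_mul_eq {q : ℤ} {n n' t : ℕ} (hq : q ≠ 1)
    (hr : (n : ℤ) * (q - 1) = n' * (q ^ t - 1)) : gaugeExponent q n' t = n := by
  apply mul_right_cancel₀ (sub_ne_zero.mpr hq)
  rw [hr, gaugeExponent, mul_assoc, geom_sum_mul]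

section Shifts

variable {R : Type*} [CommRing R] (φ : R →+* R)

def cyclicShift {d : ℕ} [NeZero d] (γ : R) (x : Fin d → R) : Fin d → R :=
  fun i => (Pi.mulSingle 0 γ : Fin d → R) i * φ (x (i - 1))

def blockShift {t d : ℕ} [NeZero t] [NeZero d] (c : Fin t → R) (Y : Matrix (Fin t) (Fin d) R) :
    Matrix (Fin t) (Fin d) R :=
  Matrix.of fun s i => if i = 0 then c s * φ (Y (s - 1) (-1)) else φ (Y s (i - 1))

variable (R) in
def blockReindex (t d : ℕ) : (Fin (t * d) → R) ≃ₗ[R] Matrix (Fin t) (Fin d) R :=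
  LinearEquiv.funCongrLeft R R finProdFinEquiv ≪≫ₗ LinearEquiv.curry R R (Fin t) (Fin d)

lemma blockReindex_apply {t d : ℕ} (x : Fin (t * d) → R) (s : Fin t) (i : Fin d) :
    blockReindex R t d x s i = x (finProdFinEquiv (s, i)) := rfl

lemma blockReindex_cyclicShift {t d : ℕ} [NeZero t] [NeZero d] (γ : R) (x : Fin (t * d) → R) :
    blockReindex R t d (cyclicShift φ γ x) =
      blockShift φ (Pi.mulSingle 0 γ) (blockReindex R t d x) := by
  ext s i
  simp only [blockReindex_apply, cyclicShift, blockShift, Matrix.of_apply, Pi.mulSingle_apply,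
    finProdFinEquiv_eq_zero_iff, finProdFinEquiv_sub_one]
  by_cases hi : i = 0
  · by_cases hs : s = 0 <;> simp [hi, hs]
  · simp [hi]

def hadamardUnitsEquiv {m n : Type*} (Λ : Matrix m n Rˣ) : Matrix m n R ≃ₗ[R] Matrix m n R :=
  LinearEquiv.piCongrRight fun s => LinearEquiv.piCongrRight fun i =>
    LinearEquiv.smulOfUnit (Λ s i)

lemma hadamardUnitsEquiv_apply {m n : Type*} (Λ : Matrix m n Rˣ) (Y : Matrix m n R) (s : m)
    (i : n) : hadamardUnitsEquiv Λ Y s i = Λ s i * Y s i := rfl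

lemma hadamardUnitsEquiv_blockShift {t d : ℕ} [NeZero t] [NeZero d]
    (Λ : Matrix (Fin t) (Fin d) Rˣ) (c c' : Fin t → R)
    (h_inner : ∀ s i, i ≠ 0 → φ (Λ s (i - 1)) = Λ s i)
    (h_carry : ∀ s, c' s * φ (Λ (s - 1) (-1)) = Λ s 0 * c s) (Y : Matrix (Fin t) (Fin d) R) :
    hadamardUnitsEquiv Λ (blockShift φ c Y) = blockShift φ c' (hadamardUnitsEquiv Λ Y) := by
  ext s i
  simp only [hadamardUnitsEquiv_apply, blockShift, Matrix.of_apply, map_mul]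
  split_ifs with hi
  · rw [hi, ← mul_assoc, ← h_carry, mul_assoc]
  · rw [h_inner s i hi]

noncomputable def mulLeftLinearEquiv {m n : Type*} [Fintype m] [DecidableEq m] (W : Matrix m m R)
    (hW : IsUnit W.det) : Matrix m n R ≃ₗ[R] Matrix m n R :=
  LinearEquiv.ofLinearMap (mulLeftLinearMap n R W) (mulLeftLinearMap n R W⁻¹)
    (by ext; simp [Matrix.mul_nonsing_inv_cancel_left _ _ hW])
    (by ext; simp [Matrix.nonsing_inv_mul_cancel_left _ _ hW])

lemma mulLeftLinearEquiv_apply {m n : Type*} [Fintype m] [DecidableEq m] (W : Matrix m m R)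
    (hW : IsUnit W.det) (Y : Matrix m n R) : mulLeftLinearEquiv W hW Y = W * Y := rfl

lemma mul_blockShift {t d : ℕ} [NeZero t] [NeZero d] (W : Matrix (Fin t) (Fin t) R)
    (c γ : Fin t → R) (hWφ : ∀ j s, φ (W j s) = W j s)
    (hc : ∀ j s, W j s * c s = γ j * W j (s - 1)) (Y : Matrix (Fin t) (Fin d) R) :
    W * blockShift φ c Y = Matrix.of fun j => cyclicShift φ (γ j) ((W * Y) j) := by
  ext j i
  simp only [Matrix.mul_apply, blockShift, cyclicShift, Matrix.of_apply, Pi.mulSingle_apply,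
    map_sum, map_mul, hWφ]
  split_ifs with hi
  · rw [hi, zero_sub, Finset.mul_sum]
    refine Fintype.sum_equiv (Equiv.subRight 1) _ _ fun s => ?_
    rw [← mul_assoc, hc, Equiv.subRight_apply, mul_assoc]
  · rw [one_mul]

end Shifts

section LaurentSeries

variable {k : Type*} [Field k] (φ : LaurentSeries k →+* LaurentSeries k)

lemma Dphi_eq_cyclicShift (d n : ℕ) [NeZero d] (a : k) :
    Dphi φ d n a = cyclicShift φ (single (n : ℤ) a) := by
  ext x i : 2
  simp only [Dphi, cyclicShift, Pi.mulSingle_apply, Fin.val_eq_zero_iff]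
  split_ifs with hi
  · subst hi
    congr 3
    ext
    simp [Fin.val_neg_one_of_neZero]
  · rw [one_mul]
    congr 2
    ext
    exact (Fin.val_sub_one_of_ne_zero hi).symm

lemma map_single_of_coeff {b : ℕ} (hb : b ≠ 0)
    (hφ1 : ∀ (f : LaurentSeries k) (m : ℤ), (φ f).coeff ((b : ℤ) * m) = f.coeff m)
    (hφ2 : ∀ (f : LaurentSeries k) (m : ℤ), ¬ ((b : ℤ) ∣ m) → (φ f).coeff m = 0)
    (e : ℤ) (c : k) :
    φ (single e c) = single ((b : ℤ) * e) c := by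
  ext m
  by_cases h : (b : ℤ) ∣ m
  · obtain ⟨m, rfl⟩ := h
    rw [hφ1, coeff_single, coeff_single]
    simp [hb]
  · rw [hφ2 _ _ h, coeff_single, if_neg (by rintro rfl; exact h ⟨e, rfl⟩)]

variable (k) in
noncomputable def gaugeUnits (b n' t d : ℕ) : Matrix (Fin t) (Fin d) (LaurentSeries k)ˣ :=
  Matrix.of fun s i => Units.mk0
    (single ((b : ℤ) ^ (i : ℕ) * gaugeExponent ((b : ℤ) ^ d) n' s) 1) (single_ne_zero one_ne_zero)

section Gauge

variable {φ} {b : ℕ} (hφ : ∀ (e : ℤ) (c : k), φ (single e c) = single ((b : ℤ) * e) c)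
  {t d : ℕ} [NeZero d]
include hφ

lemma map_gaugeUnits_sub_one (n' : ℕ) (s : Fin t) {i : Fin d} (hi : i ≠ 0) :
    φ (gaugeUnits k b n' t d s (i - 1)) = gaugeUnits k b n' t d s i := by
  simp only [gaugeUnits, Matrix.of_apply, Units.val_mk0, hφ, ← mul_assoc,
    Fin.val_sub_one_of_ne_zero hi, mul_pow_sub_one (Fin.val_ne_zero_iff.mpr hi)]

lemma gaugeUnits_carry [NeZero t] {n n' : ℕ} (hq : (b : ℤ) ^ d ≠ 1)
    (hr : (n : ℤ) * ((b : ℤ) ^ d - 1) = n' * (((b : ℤ) ^ d) ^ t - 1)) (a : k) (s : Fin t) :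
    single (n' : ℤ) ((Pi.mulSingle 0 a : Fin t → k) s) * φ (gaugeUnits k b n' t d (s - 1) (-1)) =
      gaugeUnits k b n' t d s 0 *
        (Pi.mulSingle 0 (single (n : ℤ) a) : Fin t → LaurentSeries k) s := by
  have hb : (b : ℤ) * (b : ℤ) ^ (d - 1) = (b : ℤ) ^ d := mul_pow_sub_one (NeZero.ne d) _
  simp only [gaugeUnits, Matrix.of_apply, Units.val_mk0, hφ, Fin.val_neg_one_of_neZero,
    ← mul_assoc, hb, Fin.val_zero, pow_zero, one_mul, Pi.mulSingle_apply, single_mul_single,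
    mul_one]
  split_ifs with hs
  · rw [hs, zero_sub, Fin.val_neg_one_of_neZero, Fin.val_zero, gaugeExponent_zero,
      single_zero_one, one_mul, ← gaugeExponent_eq_of_mul_eq hq hr, ← gaugeExponent_succ,
      Nat.sub_add_cancel NeZero.one_le]
  · rw [mul_one, ← gaugeExponent_succ, Fin.val_sub_one_of_ne_zero hs,
      Nat.sub_add_cancel (Nat.one_le_iff_ne_zero.mpr (Fin.val_ne_zero_iff.mpr hs))]

end Gauge

lemma isUnit_det_vandermonde_map_C {t : ℕ} {α : Fin t → k} (hα : Function.Injective α) :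
    IsUnit ((Matrix.vandermonde α).map (C : k →+* LaurentSeries k)).det := by
  rw [← RingHom.mapMatrix_apply, ← RingHom.map_det, isUnit_iff_ne_zero, map_ne_zero]
  exact Matrix.det_vandermonde_ne_zero_iff.mpr hα

lemma vandermonde_map_C_mul_single {t : ℕ} [NeZero t] {α : Fin t → k} {a : k}
    (hα : ∀ j, α j ^ t = a) (n' : ℕ) (j s : Fin t) :
    (Matrix.vandermonde α).map C j s * single (n' : ℤ) ((Pi.mulSingle 0 a : Fin t → k) s) =
      single (n' : ℤ) (α j) * (Matrix.vandermonde α).map C j (s - 1) := by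
  simp only [Matrix.map_apply, Matrix.vandermonde_apply, C_apply, single_mul_single, zero_add,
    add_zero, pow_val_mul_mulSingle (hα j)]

end LaurentSeries

theorem stmt8_general
    (k : Type*) [Field k] (b : ℕ) (hb : 1 < b)
    (φ : LaurentSeries k →+* LaurentSeries k)
    (hφ1 : ∀ (f : LaurentSeries k) (m : ℤ), (φ f).coeff ((b : ℤ) * m) = f.coeff m)
    (hφ2 : ∀ (f : LaurentSeries k) (m : ℤ), ¬ ((b : ℤ) ∣ m) → (φ f).coeff m = 0)
    (d d' t : ℕ) (hd' : 0 < d') (ht : 0 < t)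
    (hdt : d = d' * t)
    (n n' : ℕ)
    (hr : (n : ℤ) * ((b : ℤ) ^ d' - 1) = (n' : ℤ) * ((b : ℤ) ^ d - 1))
    (a : k)
    (α : Fin t → k) (hroots : ∀ j, α j ^ t = a) (hdist : Function.Injective α) :
    ∃ F : (Fin d → LaurentSeries k) ≃ₗ[LaurentSeries k]
        (Fin t → Fin d' → LaurentSeries k),
      ∀ x, F (Dphi φ d n a x) = fun j => Dphi φ d' n' (α j) (F x j) := by
  obtain rfl : d = t * d' := hdt.trans (mul_comm _ _)
  have : NeZero t := ⟨ht.ne'⟩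
  have : NeZero d' := ⟨hd'.ne'⟩
  have hφ := map_single_of_coeff φ (by omega : b ≠ 0) hφ1 hφ2
  have hφC : ∀ c : k, φ (C c) = C c := fun c => by rw [C_apply, hφ, mul_zero]
  have hq : (b : ℤ) ^ d' ≠ 1 := (one_lt_pow₀ (by exact_mod_cast hb) hd'.ne').ne'
  rw [pow_mul'] at hr
  let F : (Fin (t * d') → LaurentSeries k) ≃ₗ[LaurentSeries k]
      Matrix (Fin t) (Fin d') (LaurentSeries k) :=
    blockReindex _ t d' ≪≫ₗ hadamardUnitsEquiv (gaugeUnits k b n' t d') ≪≫ₗ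
      mulLeftLinearEquiv _ (isUnit_det_vandermonde_map_C hdist)
  have hF : ∀ x, F (cyclicShift φ (single (n : ℤ) a) x) =
      Matrix.of fun j => cyclicShift φ (single (n' : ℤ) (α j)) (F x j) := fun x => by
    simp only [F, LinearEquiv.trans_apply, blockReindex_cyclicShift,
      hadamardUnitsEquiv_blockShift φ _ _ _ (map_gaugeUnits_sub_one hφ n')
        (gaugeUnits_carry hφ hq hr a),
      mulLeftLinearEquiv_apply,
      mul_blockShift φ ((Matrix.vandermonde α).map C) _ _ (fun _ _ => hφC _)
        (vandermonde_map_C_mul_single hroots n')]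
  refine ⟨F, fun x => ?_⟩
  simp only [Dphi_eq_cyclicShift]
  exact hF x

/-- With `σ = id`, `t` coprime to `p`, `d = d' t`, `n/(b^d-1) = n'/(b^{d'}-1)`, and
`α_1, …, α_t` the (distinct) `t`-th roots of `a`, one has
`D(d,n,a) ≅ D(d',n',α_1) ⊕ ⋯ ⊕ D(d',n',α_t)`. -/
theorem stmt8 (p : ℕ) [Fact p.Prime]
    (k : Type*) [Field k] [IsAlgClosed k] [CharP k p] (b : ℕ) (hb : 1 < b)
    (φ : LaurentSeries k →+* LaurentSeries k)
    (hφ1 : ∀ (f : LaurentSeries k) (m : ℤ), (φ f).coeff ((b : ℤ) * m) = f.coeff m)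
    (hφ2 : ∀ (f : LaurentSeries k) (m : ℤ), ¬ ((b : ℤ) ∣ m) → (φ f).coeff m = 0)
    (d d' t : ℕ) (hd' : 0 < d') (ht : 0 < t) (htp : t.Coprime p)
    (hdt : d = d' * t) (hd : 0 < d)
    (n n' : ℕ)
    (hr : (n : ℤ) * ((b : ℤ) ^ d' - 1) = (n' : ℤ) * ((b : ℤ) ^ d - 1))
    (a : k) (ha : a ≠ 0)
    (α : Fin t → k) (hroots : ∀ j, α j ^ t = a) (hdist : Function.Injective α) :
    ∃ F : (Fin d → LaurentSeries k) ≃ₗ[LaurentSeries k]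
        (Fin t → Fin d' → LaurentSeries k),
      ∀ x, F (Dphi φ d n a x) = fun j => Dphi φ d' n' (α j) (F x j) :=
  stmt8_general k b hb φ hφ1 hφ2 d d' t hd' ht hdt n n' hr a α hroots hdist
end

section
/- (Eigenvector existence / lifting lemma) Let M be a free k[[u]]-module with ŌÜ-semilinear ŌÜ_M, őī ‚Č• 1, n ‚Č• 0 and c > n/(b^őī ‚ąí 1) an integer. If x ‚ąą M satisfies ŌÜ^őī(x) ‚Č° u^n x (mod u^{n+c} M) and x ‚ąČ uM, then there exists z ‚ąą M with z ‚Č° x (mod uM) (in particular z ‚Ȇ 0) and ŌÜ^őī(z) = u^n z. -/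
/-!
Put `ψ = φ_M^δ`. Since `φ(X) = X^b`, the map `ψ` sends `X^m M` into `X^{b^δ m} M`. If `y` is an
approximate eigenvector, `ψ y - Xⁿ y = X^{n+m} q` with `m ≥ c`, then the corrected vector
`y + X^m q` has defect `ψ(X^m q) ∈ X^{b^δ m} M`, and `b^δ m > n + m` because
`c (b^δ - 1) > n`. Iterating from `x` gives an `X`-adically convergent sequence whose limit is an
exact eigenvector congruent to `x` modulo `X^c`.
-/

open PowerSeries

namespace PowerSeries

variable {R : Type*} [CommRing R]

theorem map_X_eq_X_pow {φ : R⟦X⟧ →+* R⟦X⟧} {σ : R →+* R} {b : ℕ} (hb : 0 < b)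
    (hφ₁ : ∀ f m, coeff (b * m) (φ f) = σ (coeff m f))
    (hφ₂ : ∀ f m, ¬ b ∣ m → coeff m (φ f) = 0) : φ X = X ^ b := by
  ext m
  rw [coeff_X_pow]
  by_cases hbm : b ∣ m
  · obtain ⟨m, rfl⟩ := hbm
    rw [hφ₁, coeff_X]
    by_cases hm : m = 1
    · simp [hm]
    · rw [if_neg hm, map_zero, if_neg]
      exact fun h => hm (Nat.eq_of_mul_eq_mul_left hb (h.trans (mul_one b).symm))
  · rw [hφ₂ X m hbm, if_neg]
    rintro rfl
    exact hbm dvd_rfl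

theorem eq_zero_of_forall_X_pow_dvd {f : R⟦X⟧} (h : ∀ N, X ^ N ∣ f) : f = 0 := by
  ext m
  exact X_pow_dvd_iff.mp (h (m + 1)) m m.lt_succ_self

theorem X_pow_dvd_sub_of_le {f : ℕ → R⟦X⟧} {c : ℕ}
    (hf : ∀ j, X ^ (c + j) ∣ f (j + 1) - f j) {j j' : ℕ} (hjj' : j ≤ j') :
    X ^ (c + j) ∣ f j' - f j := by
  induction j', hjj' using Nat.le_induction with
  | base => simp
  | succ j' hjj' ih =>
    rw [← sub_add_sub_cancel]
    exact dvd_add ((pow_dvd_pow X (by omega)).trans (hf j')) ih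

theorem exists_forall_X_pow_dvd_sub {f : ℕ → R⟦X⟧} {c : ℕ}
    (hf : ∀ j, X ^ (c + j) ∣ f (j + 1) - f j) : ∃ L, ∀ j, X ^ (c + j) ∣ L - f j := by
  refine ⟨mk fun m => coeff m (f (m + 1)), fun j => X_pow_dvd_iff.mpr fun m hm => ?_⟩
  have hcoeff : coeff m (f (max (m + 1) j) - f (m + 1)) = 0 ∧
      coeff m (f (max (m + 1) j) - f j) = 0 :=
    ⟨X_pow_dvd_iff.mp (X_pow_dvd_sub_of_le hf (le_max_left _ j)) m (by omega),
      X_pow_dvd_iff.mp (X_pow_dvd_sub_of_le hf (le_max_right _ j)) m hm⟩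
  simp only [map_sub, coeff_mk, sub_eq_zero] at hcoeff ⊢
  rw [← hcoeff.1, hcoeff.2]

end PowerSeries

section Lifting

variable {R ι : Type*} [CommRing R]

def MultipliesXOrder (e : ℕ) (F : (ι → R⟦X⟧) → ι → R⟦X⟧) : Prop :=
  ∀ m w, (∀ i, (X : R⟦X⟧) ^ m ∣ w i) → ∀ i, X ^ (e * m) ∣ F w i

theorem multipliesXOrder_of_semilinear {φ : R⟦X⟧ →+* R⟦X⟧} {b : ℕ} (hφX : φ X = X ^ b)
    {F : (ι → R⟦X⟧) → ι → R⟦X⟧} (hF : ∀ f w i, F (fun j => f * w j) i = φ f * F w i) :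
    MultipliesXOrder b F := by
  intro m w hw i
  choose q hq using hw
  rw [show w = fun j => X ^ m * q j from funext hq, hF, map_pow, hφX, ← pow_mul]
  exact dvd_mul_right _ _

theorem MultipliesXOrder.iterate {e : ℕ} {F : (ι → R⟦X⟧) → ι → R⟦X⟧}
    (hF : MultipliesXOrder e F) (δ : ℕ) : MultipliesXOrder (e ^ δ) F^[δ] := by
  induction δ with
  | zero => intro m w hw; simpa using hw
  | succ δ ih =>
    intro m w hw
    rw [Function.iterate_succ_apply', pow_succ', mul_assoc]
    exact hF _ _ (ih m w hw)

variable {ψ : (ι → R⟦X⟧) →+ ι → R⟦X⟧} {e n c : ℕ}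

theorem exists_eigen_approx_succ (hψ : MultipliesXOrder e ψ) (hc : n < c * (e - 1))
    {m : ℕ} (hm : c ≤ m) {y : ι → R⟦X⟧} (hy : ∀ i, X ^ (n + m) ∣ ψ y i - X ^ n * y i) :
    ∃ y', (∀ i, X ^ m ∣ y' i - y i) ∧ ∀ i, X ^ (n + (m + 1)) ∣ ψ y' i - X ^ n * y' i := by
  choose q hq using hy
  let r : ι → R⟦X⟧ := fun i => X ^ m * q i
  refine ⟨y + r, fun i => by simp [r], fun i => ?_⟩
  have hdefect : ψ (y + r) i - X ^ n * (y + r) i = ψ r i := by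
    simp only [map_add, Pi.add_apply]
    linear_combination hq i
  have hexp : n + (m + 1) ≤ e * m := by
    have he : e ≠ 0 := by rintro rfl; simp at hc
    obtain ⟨e, rfl⟩ := Nat.exists_eq_add_one.mpr (Nat.pos_of_ne_zero he)
    rw [Nat.add_sub_cancel] at hc
    nlinarith
  rw [hdefect]
  exact (pow_dvd_pow X hexp).trans (hψ m _ (fun i => dvd_mul_right _ _) i)

theorem exists_eigen_approx_seq (hψ : MultipliesXOrder e ψ) (hc : n < c * (e - 1))
    {x : ι → R⟦X⟧} (hx : ∀ i, X ^ (n + c) ∣ ψ x i - X ^ n * x i) :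
    ∃ z : ℕ → ι → R⟦X⟧, z 0 = x ∧ ∀ j, (∀ i, X ^ (c + j) ∣ z (j + 1) i - z j i) ∧
      ∀ i, X ^ (n + (c + j)) ∣ ψ (z j) i - X ^ n * z j i := by
  -- The hypothesis sits inside the `∃` so that `choose` yields a total step function to iterate.
  have hstep : ∀ (j : ℕ) (y : ι → R⟦X⟧), ∃ y' : ι → R⟦X⟧,
      (∀ i, X ^ (n + (c + j)) ∣ ψ y i - X ^ n * y i) →
        (∀ i, X ^ (c + j) ∣ y' i - y i) ∧
          ∀ i, X ^ (n + (c + (j + 1))) ∣ ψ y' i - X ^ n * y' i := fun j y => by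
    by_cases hy : ∀ i, X ^ (n + (c + j)) ∣ ψ y i - X ^ n * y i
    · obtain ⟨y', hy'⟩ := exists_eigen_approx_succ hψ hc (Nat.le_add_right c j) hy
      exact ⟨y', fun _ => hy'⟩
    · exact ⟨y, fun h => absurd h hy⟩
  choose T hT using hstep
  let z : ℕ → ι → R⟦X⟧ := fun j => Nat.rec x T j
  have hz : ∀ j, ∀ i, X ^ (n + (c + j)) ∣ ψ (z j) i - X ^ n * z j i := by
    intro j
    induction j with
    | zero => exact hx
    | succ j ih => exact (hT j (z j) ih).2
  exact ⟨z, rfl, fun j => ⟨(hT j (z j) (hz j)).1, hz j⟩⟩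

theorem exists_eigenvector_of_approx (hψ : MultipliesXOrder e ψ) (hc : n < c * (e - 1))
    {x : ι → R⟦X⟧} (hx : ∀ i, X ^ (n + c) ∣ ψ x i - X ^ n * x i) :
    ∃ z : ι → R⟦X⟧, (∀ i, X ^ c ∣ z i - x i) ∧ ψ z = fun i => X ^ n * z i := by
  obtain ⟨z, rfl, hz⟩ := exists_eigen_approx_seq hψ hc hx
  choose L hL using fun i => exists_forall_X_pow_dvd_sub (f := fun j => z j i) fun j => (hz j).1 i
  refine ⟨L, fun i => by simpa using hL i 0, funext fun i => ?_⟩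
  rw [← sub_eq_zero]
  refine eq_zero_of_forall_X_pow_dvd fun j => ?_
  have hdecomp : ψ L i - X ^ n * L i =
      ψ (L - z j) i + (ψ (z j) i - X ^ n * z j i) - X ^ n * (L i - z j i) := by
    simp only [map_sub, Pi.sub_apply]
    ring
  have he : 1 ≤ e := Nat.pos_of_ne_zero (by rintro rfl; simp at hc)
  rw [hdecomp]
  refine dvd_sub (dvd_add ?_ ((pow_dvd_pow X (by omega)).trans ((hz j).2 i))) ?_
  · refine (pow_dvd_pow X ?_).trans (hψ (c + j) (L - z j) (fun i => hL i j) i)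
    nlinarith
  · exact (pow_dvd_pow X (by omega)).trans (dvd_mul_of_dvd_right (hL i j) _)

end Lifting

theorem stmt13_general (k : Type*) [Field k] (σ : k ≃+* k) (b : ℕ) (hb : 1 < b)
    (φ : PowerSeries k →+* PowerSeries k)
    (hφ1 : ∀ (f : PowerSeries k) (m : ℕ),
      PowerSeries.coeff (b * m) (φ f) = σ (PowerSeries.coeff m f))
    (hφ2 : ∀ (f : PowerSeries k) (m : ℕ), ¬ (b ∣ m) →
      PowerSeries.coeff m (φ f) = 0)
    (d : ℕ) (φM : (Fin d → PowerSeries k) → (Fin d → PowerSeries k))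
    (hadd : ∀ x y, φM (x + y) = φM x + φM y)
    (hsemi : ∀ (f : PowerSeries k) (x : Fin d → PowerSeries k) (i : Fin d),
      φM (fun j => f * x j) i = φ f * φM x i)
    (δ n c : ℕ) (hc : c * (b ^ δ - 1) > n)
    (x : Fin d → PowerSeries k)
    (hx : ¬ ∀ i, (PowerSeries.X : PowerSeries k) ∣ x i)
    (hcong : ∀ i, (PowerSeries.X : PowerSeries k) ^ (n + c) ∣
      (φM^[δ] x i - PowerSeries.X ^ n * x i)) :
    ∃ z : Fin d → PowerSeries k,
      (∀ i, (PowerSeries.X : PowerSeries k) ∣ (z i - x i)) ∧ z ≠ 0 ∧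
      φM^[δ] z = fun i => PowerSeries.X ^ n * z i := by
  have hφX : φ X = X ^ b := map_X_eq_X_pow (σ := σ.toRingHom) (by omega) hφ1 hφ2
  let ψ := AddMonoidHom.mk' φM^[δ] (iterate_map_add (AddMonoidHom.mk' φM hadd) δ)
  have hψ : MultipliesXOrder (b ^ δ) ψ := (multipliesXOrder_of_semilinear hφX hsemi).iterate δ
  obtain ⟨z, hzx, hz⟩ := exists_eigenvector_of_approx hψ hc hcong
  have hc₀ : c ≠ 0 := by rintro rfl; simp at hc
  have hzx₁ : ∀ i, X ∣ z i - x i := fun i => (dvd_pow_self X hc₀).trans (hzx i)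
  refine ⟨z, hzx₁, ?_, hz⟩
  rintro rfl
  exact hx fun i => by simpa using hzx₁ i

/-- Eigenvector lifting lemma.  Let `M = k[[u]]^d` with a φ-semilinear map `φM`
(additive and satisfying `φM (f • x) = φ(f) • φM x`), `δ ≥ 1`, `n ≥ 0`, and
`c > n/(b^δ - 1)` an integer.  If `x ∈ M \ uM` satisfies
`φ^δ(x) ≡ uⁿ x (mod u^{n+c} M)`, then there exists `z ∈ M` with `z ≡ x (mod uM)`
(in particular `z ≠ 0`) and `φ^δ(z) = uⁿ z`. -/
theorem stmt13 (k : Type*) [Field k] (σ : k ≃+* k) (b : ℕ) (hb : 1 < b)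
    (φ : PowerSeries k →+* PowerSeries k)
    (hφ1 : ∀ (f : PowerSeries k) (m : ℕ),
      PowerSeries.coeff (b * m) (φ f) = σ (PowerSeries.coeff m f))
    (hφ2 : ∀ (f : PowerSeries k) (m : ℕ), ¬ (b ∣ m) →
      PowerSeries.coeff m (φ f) = 0)
    (d : ℕ) (φM : (Fin d → PowerSeries k) → (Fin d → PowerSeries k))
    (hadd : ∀ x y, φM (x + y) = φM x + φM y)
    (hsemi : ∀ (f : PowerSeries k) (x : Fin d → PowerSeries k) (i : Fin d),
      φM (fun j => f * x j) i = φ f * φM x i)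
    (δ n c : ℕ) (hδ : 1 ≤ δ) (hc : c * (b ^ δ - 1) > n)
    (x : Fin d → PowerSeries k)
    (hx : ¬ ∀ i, (PowerSeries.X : PowerSeries k) ∣ x i)
    (hcong : ∀ i, (PowerSeries.X : PowerSeries k) ^ (n + c) ∣
      (φM^[δ] x i - PowerSeries.X ^ n * x i)) :
    ∃ z : Fin d → PowerSeries k,
      (∀ i, (PowerSeries.X : PowerSeries k) ∣ (z i - x i)) ∧ z ≠ 0 ∧
      φM^[δ] z = fun i => PowerSeries.X ^ n * z i :=
  stmt13_general k σ b hb φ hφ1 hφ2 d φM hadd hsemi δ n c hc x hx hcong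
end

section
/- The ŌÜ-module D(r) := D(‚Ąď(r), n) for n ‚ąą N(r) is a simple object of Mod^ŌÜ_{/K}: any nonzero ŌÜ-stable K-subspace of D(r) equals D(r). -/
/-!
Let `x ∈ W` be a nonzero vector of minimal support. The operator `Dφ^d` acts diagonally,
`(Dφ^d x)_j = φ^j(uⁿa) · φ^d(x_j)`, so it does not enlarge supports, and minimality forces
`Dφ^d x = c • x`. Comparing `u`-adic orders in a coordinate `j` of the support gives
`ord c = n bʲ + (b^d - 1) ord x_j`, so `n bʲ` has the same residue modulo `b^d - 1` for all
`j` in the support. For `d = ℓ(r)` and `n ∈ N(r)` these residues are pairwise distinct: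
`n bⁱ ≡ n bʲ` would make `r (bʲ - bⁱ)` an integer, hence `bⁱ ≡ bʲ` modulo the denominator
of `r`, against the minimality of `ℓ(r)`. So `x` is supported at a single coordinate, and
applying `Dφ` moves it through all coordinates, which span the whole space.
-/

open HahnSeries Function Fin.NatCast

theorem Rat.den_dvd_of_mul_eq_intCast {r : ℚ} {z c : ℤ} (h : r * z = c) :
    (r.den : ℤ) ∣ z := by
  have hnum : r.num * z = c * r.den := by
    have : (r.num : ℚ) * z = c * r.den := by rw [← Rat.mul_den_eq_num, ← h]; ring
    exact_mod_cast this
  have hcop : IsCoprime (r.den : ℤ) r.num := by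
    rw [Int.isCoprime_iff_gcd_eq_one]
    simpa [Int.gcd, Nat.coprime_comm] using r.reduced
  exact hcop.dvd_of_dvd_mul_left ⟨c, by linear_combination hnum⟩

theorem eq_smul_of_support_subset_of_minimal {K ι : Type*} [Field K] [Finite ι]
    {W : Submodule K (ι → K)} {x y : ι → K}
    (hmin : ∀ z ∈ W, z ≠ 0 → (support x).ncard ≤ (support z).ncard)
    (hx : x ∈ W) (hy : y ∈ W) (hyx : support y ⊆ support x) {j : ι} (hj : x j ≠ 0) :
    y = (y j / x j) • x := by
  set z := y - (y j / x j) • x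
  have hzx : support z ⊂ support x := by
    refine ⟨fun i hi hxi => hi ?_, fun h => h (show x j ≠ 0 from hj) ?_⟩
    · have hyi : y i = 0 := by_contra fun hyi => hyx hyi hxi
      simp [z, hyi, hxi]
    · simp [z, hj]
  rw [← sub_eq_zero]
  by_contra hz
  exact (hmin z (W.sub_mem hy (W.smul_mem _ hx)) hz).not_gt (Set.ncard_lt_ncard hzx)

theorem iterate_map_ne_zero {K : Type*} [DivisionRing K] (φ : K →+* K) (t : ℕ) {f : K}
    (hf : f ≠ 0) : (⇑φ)^[t] f ≠ 0 := by
  simpa using (φ.injective.iterate t).ne hf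

theorem Fin.val_zero_sub_one {d : ℕ} [NeZero d] : (((0 : Fin d) - 1 : Fin d) : ℕ) = d - 1 := by
  obtain ⟨d, rfl⟩ := Nat.exists_eq_succ_of_ne_zero (NeZero.ne d)
  simp

theorem eq_of_mul_pow_modEq {b : ℕ} (hb : 1 < b) {r : ℚ} {n : ℕ}
    (hn : ∃ m : ℤ, (n : ℚ) / ((b : ℚ) ^ (orderOf (b : ZMod r.den)) - 1) - r = (m : ℚ))
    {i j : ℕ} (hi : i < orderOf (b : ZMod r.den)) (hj : j < orderOf (b : ZMod r.den))
    (hij : n * (b : ℤ) ^ i ≡ n * (b : ℤ) ^ j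
      [ZMOD (b : ℤ) ^ orderOf (b : ZMod r.den) - 1]) :
    i = j := by
  set d := orderOf (b : ZMod r.den)
  obtain ⟨c, hc⟩ := Int.modEq_iff_dvd.mp hij
  obtain ⟨m, hm⟩ := hn
  have hB : (b : ℚ) ^ d - 1 ≠ 0 :=
    sub_ne_zero.mpr (one_lt_pow₀ (by exact_mod_cast hb) (by omega)).ne'
  have hint : r * (((b : ℤ) ^ j - (b : ℤ) ^ i : ℤ) : ℚ) =
      ((c - m * ((b : ℤ) ^ j - (b : ℤ) ^ i) : ℤ) : ℚ) := by
    have hn' : (n : ℚ) = (r + m) * ((b : ℚ) ^ d - 1) := by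
      field_simp at hm
      linarith
    have hcq : (n : ℚ) * (b : ℚ) ^ j - n * (b : ℚ) ^ i = ((b : ℚ) ^ d - 1) * c := by
      exact_mod_cast hc
    rw [hn'] at hcq
    push_cast
    apply mul_left_cancel₀ hB
    linear_combination hcq
  have hpow : (b : ZMod r.den) ^ j = (b : ZMod r.den) ^ i := by
    have := (ZMod.intCast_zmod_eq_zero_iff_dvd _ _).mpr (Rat.den_dvd_of_mul_eq_intCast hint)
    push_cast at this
    exact sub_eq_zero.mp this
  rw [(orderOf_pos_iff.mp (by omega)).pow_inj_mod, Nat.mod_eq_of_lt hi, Nat.mod_eq_of_lt hj]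
    at hpow
  exact hpow.symm

section Dphi

variable {k : Type*} [Field k] {φ : LaurentSeries k →+* LaurentSeries k} {d n : ℕ} {a : k}
  {W : Submodule (LaurentSeries k) (Fin d → LaurentSeries k)}

theorem Dphi_apply [NeZero d] (x : Fin d → LaurentSeries k) (j : Fin d) :
    Dphi φ d n a x j = (if j = 0 then single (n : ℤ) a else 1) * φ (x (j - 1)) := by
  rcases eq_or_ne j 0 with rfl | hj
  · simp only [Dphi, Fin.val_zero, if_true]
    congr 3
    exact Fin.ext Fin.val_zero_sub_one.symm
  · simp only [Dphi, Fin.val_eq_zero_iff, hj, if_false, one_mul]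
    congr 2
    exact Fin.ext (Fin.val_sub_one_of_ne_zero hj).symm

theorem Dphi_single [NeZero d] (i : Fin d) (c : LaurentSeries k) :
    Dphi φ d n a (Pi.single i c) =
      Pi.single (i + 1) ((if i + 1 = 0 then single (n : ℤ) a else 1) * φ c) := by
  ext j : 1
  rw [Dphi_apply]
  by_cases hj : j = i + 1
  · subst hj
    simp
  · have : j - 1 ≠ i := fun h => hj (by rw [← h, sub_add_cancel])
    simp [hj, this]

theorem iterate_Dphi_apply [NeZero d] {t : ℕ} (ht : t ≤ d) (x : Fin d → LaurentSeries k)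
    (j : Fin d) :
    (Dphi φ d n a)^[t] x j =
      (if (j : ℕ) < t then (⇑φ)^[j] (single (n : ℤ) a) else 1) *
        (⇑φ)^[t] (x (j - t)) := by
  induction t generalizing j with
  | zero => simp
  | succ t ih =>
    have hcoef : (if j = 0 then single (n : ℤ) a else 1) *
          φ (if ((j - 1 : Fin d) : ℕ) < t then (⇑φ)^[(j - 1 : Fin d)] (single (n : ℤ) a)
            else 1) =
        if (j : ℕ) < t + 1 then (⇑φ)^[j] (single (n : ℤ) a) else 1 := by
      rcases eq_or_ne j 0 with rfl | hj
      · have h0 : ¬ (((0 : Fin d) - 1 : Fin d) : ℕ) < t := by rw [Fin.val_zero_sub_one]; omega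
        rw [if_neg h0, if_pos rfl, map_one, mul_one, Fin.val_zero, if_pos t.succ_pos,
          iterate_zero_apply]
      · have hpos : 0 < (j : ℕ) := Nat.pos_of_ne_zero (Fin.val_ne_zero_iff.mpr hj)
        rw [Fin.val_sub_one_of_ne_zero hj, if_neg hj, one_mul]
        split_ifs
        · rw [← iterate_succ_apply' φ]
          exact congrArg (fun m => (⇑φ)^[m] _) (Nat.sub_add_cancel hpos)
        · omega
        · omega
        · exact map_one φ
    have hidx : j - 1 - (t : Fin d) = j - ((t + 1 : ℕ) : Fin d) := by
      rw [Nat.cast_succ, sub_sub, add_comm]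
    rw [iterate_succ_apply', Dphi_apply, ih (by omega), map_mul, ← mul_assoc, hcoef,
      ← iterate_succ_apply' φ, hidx]

theorem iterate_Dphi_self [NeZero d] (x : Fin d → LaurentSeries k) (j : Fin d) :
    (Dphi φ d n a)^[d] x j = (⇑φ)^[j] (single (n : ℤ) a) * (⇑φ)^[d] (x j) := by
  simp [iterate_Dphi_apply le_rfl]

theorem support_iterate_Dphi_self_subset [NeZero d] (x : Fin d → LaurentSeries k) :
    support ((Dphi φ d n a)^[d] x) ⊆ support x :=
  support_subset_iff'.mpr fun j hj => by
    rw [iterate_Dphi_self, notMem_support.mp hj, iterate_map_zero, mul_zero]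

theorem eq_top_of_single_mem [NeZero d] (ha : a ≠ 0) (hW : Set.MapsTo (Dphi φ d n a) W W)
    {i : Fin d} {c : LaurentSeries k} (hc : c ≠ 0) (hi : Pi.single i c ∈ W) : W = ⊤ := by
  have hstep : ∀ i (c : LaurentSeries k), c ≠ 0 → Pi.single i c ∈ W →
      ∃ c', c' ≠ 0 ∧ Pi.single (i + 1) c' ∈ W := fun i c hc hi =>
    ⟨_, mul_ne_zero (by split_ifs <;> simp [ha]) ((map_ne_zero φ).mpr hc),
      Dphi_single i c ▸ hW hi⟩
  have hreach : ∀ t : ℕ, ∃ c', c' ≠ 0 ∧ Pi.single (i + t) c' ∈ W := by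
    intro t
    induction t with
    | zero => exact ⟨c, hc, by simpa using hi⟩
    | succ t ih =>
      obtain ⟨c', hc', hmem⟩ := ih
      simpa only [Nat.cast_succ, add_assoc] using hstep _ c' hc' hmem
  have hbasis : ∀ j, Pi.single j 1 ∈ W := by
    intro j
    obtain ⟨c', hc', hmem⟩ := hreach (j - i : Fin d)
    rw [Fin.cast_val_eq_self, add_sub_cancel] at hmem
    simpa [← Pi.single_smul', hc'] using W.smul_mem c'⁻¹ hmem
  rw [eq_top_iff, ← (Pi.basisFun _ (Fin d)).span_eq, Submodule.span_le, Set.range_subset_iff]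
  simpa using hbasis

variable {σ : k ≃+* k} {b : ℕ}
  (hφ1 : ∀ (f : LaurentSeries k) (m : ℤ), (φ f).coeff ((b : ℤ) * m) = σ (f.coeff m))
  (hφ2 : ∀ (f : LaurentSeries k) (m : ℤ), ¬ ((b : ℤ) ∣ m) → (φ f).coeff m = 0)
include hφ1 hφ2

theorem order_map_eq (hb : 0 < b) {f : LaurentSeries k} (hf : f ≠ 0) :
    (φ f).order = b * f.order := by
  have hlead : (φ f).coeff (b * f.order) ≠ 0 := by
    rw [hφ1, map_ne_zero]
    exact coeff_order_eq_zero.not.mpr hf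
  refine le_antisymm (order_le_of_coeff_ne_zero hlead)
    ((le_order_iff_forall ((map_ne_zero φ).mpr hf)).mpr fun m hm => ?_)
  by_cases hdvd : (b : ℤ) ∣ m
  · obtain ⟨m, rfl⟩ := hdvd
    rw [hφ1, coeff_eq_zero_of_lt_order (lt_of_mul_lt_mul_left hm (by positivity)), map_zero]
  · exact hφ2 f m hdvd

theorem order_iterate_map_eq (hb : 0 < b) (t : ℕ) {f : LaurentSeries k} (hf : f ≠ 0) :
    ((⇑φ)^[t] f).order = b ^ t * f.order := by
  induction t with
  | zero => simp
  | succ t ih =>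
    rw [iterate_succ_apply', order_map_eq hφ1 hφ2 hb (iterate_map_ne_zero φ t hf), ih]
    ring

theorem order_eq_of_iterate_Dphi_self_eq_smul [NeZero d] (hb : 0 < b) (ha : a ≠ 0)
    {x : Fin d → LaurentSeries k} {c : LaurentSeries k} (hx : (Dphi φ d n a)^[d] x = c • x)
    {j : Fin d} (hj : x j ≠ 0) :
    c.order = n * b ^ (j : ℕ) + (b ^ d - 1) * (x j).order := by
  have hxj := congrFun hx j
  rw [iterate_Dphi_self, Pi.smul_apply, smul_eq_mul] at hxj
  have h1 := iterate_map_ne_zero φ j (single_ne_zero ha : single (n : ℤ) a ≠ 0)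
  have h2 := iterate_map_ne_zero φ d hj
  have hc : c ≠ 0 := left_ne_zero_of_mul (hxj ▸ mul_ne_zero h1 h2)
  have hord := congrArg order hxj
  rw [order_mul h1 h2, order_mul hc hj, order_iterate_map_eq hφ1 hφ2 hb _ hj,
    order_iterate_map_eq hφ1 hφ2 hb _ (single_ne_zero ha), order_single ha] at hord
  linear_combination -hord

theorem eq_of_iterate_Dphi_self_eq_smul [NeZero d] (hb : 0 < b) (ha : a ≠ 0)
    (hinj : ∀ i j : Fin d,
      n * (b : ℤ) ^ (i : ℕ) ≡ n * (b : ℤ) ^ (j : ℕ) [ZMOD (b : ℤ) ^ d - 1] → i = j)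
    {x : Fin d → LaurentSeries k} {c : LaurentSeries k} (hx : (Dphi φ d n a)^[d] x = c • x)
    {i j : Fin d} (hi : x i ≠ 0) (hj : x j ≠ 0) : i = j := by
  have hmod : ∀ i, x i ≠ 0 → n * (b : ℤ) ^ (i : ℕ) ≡ c.order [ZMOD (b : ℤ) ^ d - 1] :=
    fun i hi => Int.modEq_iff_dvd.mpr ⟨(x i).order,
      by linear_combination order_eq_of_iterate_Dphi_self_eq_smul hφ1 hφ2 hb ha hx hi⟩
  exact hinj i j ((hmod i hi).trans (hmod j hj).symm)

theorem exists_single_mem_of_ne_bot [NeZero d] (hb : 0 < b) (ha : a ≠ 0)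
    (hinj : ∀ i j : Fin d,
      n * (b : ℤ) ^ (i : ℕ) ≡ n * (b : ℤ) ^ (j : ℕ) [ZMOD (b : ℤ) ^ d - 1] → i = j)
    (hW : Set.MapsTo (Dphi φ d n a) W W) (hW0 : W ≠ ⊥) :
    ∃ i, ∃ c : LaurentSeries k, c ≠ 0 ∧ Pi.single i c ∈ W := by
  obtain ⟨x₀, hx₀W, hx₀⟩ := W.ne_bot_iff.mp hW0
  obtain ⟨x, ⟨hxW, hx⟩, hmin⟩ := (measure fun x : Fin d → LaurentSeries k =>
    (support x).ncard).wf.has_min {x | x ∈ W ∧ x ≠ 0} ⟨x₀, hx₀W, hx₀⟩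
  obtain ⟨j, hj⟩ := Function.ne_iff.mp hx
  have hxeig := eq_smul_of_support_subset_of_minimal
    (fun z hz hz0 => not_lt.mp (hmin z ⟨hz, hz0⟩)) hxW (hW.iterate d hxW)
    (support_iterate_Dphi_self_subset x) hj
  have hx_single : Pi.single j (x j) = x := funext fun i => by
    by_cases hi : x i = 0
    · rw [hi, Pi.single_apply, if_neg fun h : i = j => hj (h ▸ hi)]
    · rw [eq_of_iterate_Dphi_self_eq_smul hφ1 hφ2 hb ha hinj hxeig hi hj, Pi.single_eq_same]
  exact ⟨j, x j, hj, by rwa [hx_single]⟩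

theorem eq_bot_or_eq_top_of_mapsTo_Dphi (hb : 0 < b) (ha : a ≠ 0)
    (hinj : ∀ i j : Fin d,
      n * (b : ℤ) ^ (i : ℕ) ≡ n * (b : ℤ) ^ (j : ℕ) [ZMOD (b : ℤ) ^ d - 1] → i = j)
    (hW : Set.MapsTo (Dphi φ d n a) W W) : W = ⊥ ∨ W = ⊤ := by
  rcases eq_or_ne W ⊥ with hW0 | hW0
  · exact .inl hW0
  rcases Nat.eq_zero_or_pos d with rfl | hd
  · exact .inl Submodule.eq_bot_of_subsingleton
  have : NeZero d := ⟨hd.ne'⟩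
  obtain ⟨i, c, hc, hi⟩ := exists_single_mem_of_ne_bot hφ1 hφ2 hb ha hinj hW hW0
  exact .inr (eq_top_of_single_mem ha hW hc hi)

end Dphi

theorem stmt15_general (p : ℕ) [Fact p.Prime] (b : ℕ) (hb : 1 < b)
    (σ : AlgebraicClosure (ZMod p) ≃+* AlgebraicClosure (ZMod p))
    (φ : LaurentSeries (AlgebraicClosure (ZMod p)) →+*
      LaurentSeries (AlgebraicClosure (ZMod p)))
    (hφ1 : ∀ (f : LaurentSeries (AlgebraicClosure (ZMod p))) (m : ℤ),
      (φ f).coeff ((b : ℤ) * m) = σ (f.coeff m))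
    (hφ2 : ∀ (f : LaurentSeries (AlgebraicClosure (ZMod p))) (m : ℤ),
      ¬ ((b : ℤ) ∣ m) → (φ f).coeff m = 0)
    (r : ℚ) (n : ℕ)
    (hn : ∃ m : ℤ,
      (n : ℚ) / ((b : ℚ) ^ (orderOf (b : ZMod r.den)) - 1) - r = (m : ℚ)) :
    ∀ W : Submodule (LaurentSeries (AlgebraicClosure (ZMod p)))
        (Fin (orderOf (b : ZMod r.den)) → LaurentSeries (AlgebraicClosure (ZMod p))),
      (∀ x ∈ W, Dphi φ (orderOf (b : ZMod r.den)) n 1 x ∈ W) →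
      W = ⊥ ∨ W = ⊤ := fun _ hW =>
  eq_bot_or_eq_top_of_mapsTo_Dphi hφ1 hφ2 (by omega) one_ne_zero
    (fun i j hij => Fin.ext (eq_of_mul_pow_modEq hb hn i.isLt j.isLt hij)) hW

/-- Simplicity of `D(r)`.  For `r ∈ ℤ_{(b)}` with length `ℓ(r)` (the order of `b`
modulo the reduced denominator of `r`) and `n ∈ N(r)` (that is, `n/(b^{ℓ(r)} - 1)`
represents `r` modulo `ℤ`), every nonzero φ-stable subspace of
`D(r) = D(ℓ(r), n)` is the whole space. -/
theorem stmt15 (p : ℕ) [Fact p.Prime] (b : ℕ) (hb : 1 < b)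
    (σ : AlgebraicClosure (ZMod p) ≃+* AlgebraicClosure (ZMod p))
    (φ : LaurentSeries (AlgebraicClosure (ZMod p)) →+*
      LaurentSeries (AlgebraicClosure (ZMod p)))
    (hφ1 : ∀ (f : LaurentSeries (AlgebraicClosure (ZMod p))) (m : ℤ),
      (φ f).coeff ((b : ℤ) * m) = σ (f.coeff m))
    (hφ2 : ∀ (f : LaurentSeries (AlgebraicClosure (ZMod p))) (m : ℤ),
      ¬ ((b : ℤ) ∣ m) → (φ f).coeff m = 0)
    (r : ℚ) (hden : r.den.Coprime b) (n : ℕ)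
    (hn : ∃ m : ℤ,
      (n : ℚ) / ((b : ℚ) ^ (orderOf (b : ZMod r.den)) - 1) - r = (m : ℚ)) :
    ∀ W : Submodule (LaurentSeries (AlgebraicClosure (ZMod p)))
        (Fin (orderOf (b : ZMod r.den)) → LaurentSeries (AlgebraicClosure (ZMod p))),
      (∀ x ∈ W, Dphi φ (orderOf (b : ZMod r.den)) n 1 x ∈ W) →
      W = ⊥ ∨ W = ⊤ :=
  stmt15_general p b hb σ φ hφ1 hφ2 r n hn
end
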